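/- Let f(x) = r(x) be the number-of-runs function on F_2^k and t ≥ 1. For 1 ≤ i ≤ k define x_i ∈ F_2^k by x_i = 0^{k−i+1}(10)^{(i−1)/2} if i is odd and x_i = 0^{k−i+1}(10)^{(i−2)/2}1 if i is even, and set f_i = i. Then N^(1)_ID(A) ≤ r^f_ID(k, t) ≤ N^(2)_ID(B; k), where A is the k×k matrix with A_{ij} = 0 for i = j, A_{ij} = max(2t + 1 − |i − j|, 0) for i ≠ j with |i − j| odd, and A_{ij} = max(2t + 2 − |i − j|, 0) for i ≠ j with |i − j| even; and B is the k×k matrix with B_{ij} = 0 for i = j, B_{ij} = max(2(t + k) + 1 − |i − j|, 0) for i ≠ j with |i − j| odd, and B_{ij} = max(2(t + k + 1) − |i − j|, 0) for i ≠ j with |i − j| even. -/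

import Mathlib

/-- Length of a longest common subsequence of two binary words. -/
noncomputable def lcsLen (x y : List Bool) : ℕ :=
  sSup {n | ∃ z : List Bool, z.length = n ∧ z.Sublist x ∧ z.Sublist y}

/-- The insdel distance `d_ID(x,y) = |x| + |y| - 2·LCS(x,y)`. -/
noncomputable def dID (x y : List Bool) : ℕ :=
  x.length + y.length - 2 * lcsLen x y

/-- Number of runs (maximal blocks of consecutive equal symbols) of a binary word. -/
def runs (x : List Bool) : ℕ := (x.destutter (· ≠ ·)).length

/-- Maximum run length of a binary word: the largest `n` such that some constant
word of length `n` occurs as a block of consecutive symbols of `x`. -/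
noncomputable def maxRun (x : List Bool) : ℕ :=
  sSup {n | ∃ b : Bool, (List.replicate n b).IsInfix x}

/-- `D_t(x)`: the words of length `|x| - t` that are subsequences of `x`. -/
def Dset (t : ℕ) (x : List Bool) : Set (List Bool) :=
  {z | z.length = x.length - t ∧ z.Sublist x}

/-- `I_t(x)`: the words of length `|x| + t` that are supersequences of `x`. -/
def Iset (t : ℕ) (x : List Bool) : Set (List Bool) :=
  {z | z.length = x.length + t ∧ x.Sublist z}

/-- A systematic encoding `x ↦ (x, p(x))` with redundancy words `p x` of length `r`
is a function-correcting insdel code for `f` correcting `t` insdel errors. -/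
noncomputable def IsFCIDC {k : ℕ} {S : Type*} (f : (Fin k → Bool) → S) (t r : ℕ)
    (p : (Fin k → Bool) → List Bool) : Prop :=
  (∀ x, (p x).length = r) ∧
  ∀ x y, f x ≠ f y → 2 * t < dID (List.ofFn x ++ p x) (List.ofFn y ++ p y)

/-- The optimal redundancy `r^f_ID(k,t)`. -/
noncomputable def optRed {k : ℕ} {S : Type*} (f : (Fin k → Bool) → S) (t : ℕ) : ℕ :=
  sInf {r | ∃ p, IsFCIDC f t r p}

/-- `p` is an irregular insdel-distance code of length `r` for the matrix `I`. -/
noncomputable def IsIrregularCode {M : ℕ} (I : Fin M → Fin M → ℕ) (r : ℕ)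
    (p : Fin M → List Bool) : Prop :=
  (∀ i, (p i).length = r) ∧ ∀ i j, I i j ≤ dID (p i) (p j)

/-- `N^(1)_ID(I)`: least length of an irregular insdel-distance code for `I`. -/
noncomputable def N1 {M : ℕ} (I : Fin M → Fin M → ℕ) : ℕ :=
  sInf {r | ∃ p, IsIrregularCode I r p}

/-- `N^(2)_ID(I; K)`: least length `r ≥ K` of an irregular insdel-distance code for `I`. -/
noncomputable def N2 {M : ℕ} (I : Fin M → Fin M → ℕ) (K : ℕ) : ℕ :=
  sInf {r | K ≤ r ∧ ∃ p, IsIrregularCode I r p}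

-- The insdel distance matrix `I_f^(1)(t, x₁, …, x_M)`.
open Classical in
noncomputable def Imat1 {k M : ℕ} {S : Type*} (f : (Fin k → Bool) → S) (t : ℕ)
    (x : Fin M → Fin k → Bool) : Fin M → Fin M → ℕ :=
  fun i j => if f (x i) ≠ f (x j) then
    2 * t + 2 - dID (List.ofFn (x i)) (List.ofFn (x j)) else 0

-- The insdel distance matrix `I_f^(2)(t, x₁, …, x_M)`.
open Classical in
noncomputable def Imat2 {k M : ℕ} {S : Type*} (f : (Fin k → Bool) → S) (t : ℕ)
    (x : Fin M → Fin k → Bool) : Fin M → Fin M → ℕ :=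
  fun i j => if f (x i) ≠ f (x j) then
    2 * t + 2 + 2 * k - dID (List.ofFn (x i)) (List.ofFn (x j)) else 0

/-- The function distance `d^f_ID(a,b)`. -/
noncomputable def dfID {k : ℕ} {S : Type*} (f : (Fin k → Bool) → S) (a b : S) : ℕ :=
  sInf {d | ∃ x y : Fin k → Bool, f x = a ∧ f y = b ∧ dID (List.ofFn x) (List.ofFn y) = d}

/-- The function distance matrix `I_f^(2)(t, f₁, …, f_E)`, with entries
`max(2(t+1+k) − d^f_ID(f_i, f_j), 0)` off the diagonal and `0` on the diagonal. -/
noncomputable def funMat2 {k E : ℕ} {S : Type*} (f : (Fin k → Bool) → S) (t : ℕ)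
    (fs : Fin E → S) : Fin E → Fin E → ℕ :=
  fun i j => if i = j then 0 else 2 * (t + 1 + k) - dfID f (fs i) (fs j)

/-- The uniform `M × M` matrix with off-diagonal entries `d` and zero diagonal. -/
def uniMat (M d : ℕ) : Fin M → Fin M → ℕ := fun i j => if i = j then 0 else d

/-- The number-of-runs function on `F_2^k`. -/
def runsFn (k : ℕ) (x : Fin k → Bool) : ℕ := runs (List.ofFn x)

/-- The VT-syndrome function `f(x) = Σ_{j=1}^k j·x_j mod (k+1)`. -/
def vtFn (k : ℕ) (x : Fin k → Bool) : ℕ :=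
  (∑ j : Fin k, ((j : ℕ) + 1) * (if x j then 1 else 0)) % (k + 1)

/-- The function ball `B^f_ID(u, ρ) = f(B_ID(u, ρ))`. -/
def fball {k : ℕ} {S : Type*} (f : (Fin k → Bool) → S) (u : Fin k → Bool) (ρ : ℕ) : Set S :=
  f '' {v : Fin k → Bool | dID (List.ofFn u) (List.ofFn v) ≤ ρ}

/-- `V_ID(r, d)`: the maximum size of an insdel ball of (integer) radius `d`
among centers in `F_2^r`. -/
noncomputable def Vid (r : ℕ) (d : ℤ) : ℕ :=
  sSup (Set.range fun x : Fin r → Bool =>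
    Nat.card {y : Fin r → Bool | (dID (List.ofFn x) (List.ofFn y) : ℤ) ≤ d})


/- ----- lcsLen basics ----- -/

lemma lcs_bdd (x y : List Bool) :
    BddAbove {n | ∃ z : List Bool, z.length = n ∧ z.Sublist x ∧ z.Sublist y} :=
  ⟨x.length, fun n hn => by obtain ⟨z, hz, hzx, _⟩ := hn; exact hz ▸ hzx.length_le⟩

lemma lcs_ne (x y : List Bool) :
    {n | ∃ z : List Bool, z.length = n ∧ z.Sublist x ∧ z.Sublist y}.Nonempty :=
  ⟨0, [], rfl, List.nil_sublist _, List.nil_sublist _⟩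

lemma exists_lcs (x y : List Bool) :
    ∃ z : List Bool, z.length = lcsLen x y ∧ z.Sublist x ∧ z.Sublist y :=
  Nat.sSup_mem (lcs_ne x y) (lcs_bdd x y)

lemma le_lcsLen {x y z : List Bool} (hx : z.Sublist x) (hy : z.Sublist y) :
    z.length ≤ lcsLen x y :=
  le_csSup (lcs_bdd x y) ⟨z, rfl, hx, hy⟩

lemma lcsLen_le_left (x y : List Bool) : lcsLen x y ≤ x.length := by
  obtain ⟨z, hz, hzx, _⟩ := exists_lcs x y
  exact hz ▸ hzx.length_le

lemma lcsLen_le_right (x y : List Bool) : lcsLen x y ≤ y.length := by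
  obtain ⟨z, hz, _, hzy⟩ := exists_lcs x y
  exact hz ▸ hzy.length_le

/-- superadditivity under concatenation -/
lemma lcs_superadd (x y p q : List Bool) :
    lcsLen x y + lcsLen p q ≤ lcsLen (x ++ p) (y ++ q) := by
  obtain ⟨z1, h1, h1x, h1y⟩ := exists_lcs x y
  obtain ⟨z2, h2, h2p, h2q⟩ := exists_lcs p q
  have := le_lcsLen (h1x.append h2p) (h1y.append h2q)
  simpa [h1, h2] using this

/-- splitting bound -/
lemma lcs_concat_le (x y p q : List Bool) :
    lcsLen (x ++ p) (y ++ q) ≤ max x.length y.length + lcsLen p q := by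
  obtain ⟨z, hz, hzx, hzy⟩ := exists_lcs (x ++ p) (y ++ q)
  obtain ⟨a, b, hab, hax, hbp⟩ := List.sublist_append_iff.mp hzx
  obtain ⟨c, d, hcd, hcy, hdq⟩ := List.sublist_append_iff.mp hzy
  rw [← hz]
  rcases List.append_eq_append_iff.mp (hab ▸ hcd : a ++ b = c ++ d) with ⟨e, hce, hbe⟩ | ⟨e, hae, hde⟩
  · have hd : d.Sublist p := ((List.sublist_append_right e d).trans (hbe ▸ hbp))
    have hdl : d.length ≤ lcsLen p q := le_lcsLen hd hdq
    have : z.length = c.length + d.length := by rw [hcd, List.length_append]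
    have hc : c.length ≤ y.length := hcy.length_le
    omega
  · have hb : b.Sublist q := ((List.sublist_append_right e b).trans (hde ▸ hdq))
    have hbl : b.length ≤ lcsLen p q := le_lcsLen hbp hb
    have : z.length = a.length + b.length := by rw [hab, List.length_append]
    have ha : a.length ≤ x.length := hax.length_le
    omega

/- ----- alternating words ----- -/

def alt : ℕ → Bool → List Bool
  | 0, _ => []
  | n + 1, b => b :: alt n (!b)

@[simp] lemma alt_length : ∀ n b, (alt n b).length = n
  | 0, _ => rfl
  | n + 1, b => by simp [alt, alt_length n]

lemma alt_chain : ∀ (n : ℕ) (b c : Bool), c ≠ b → List.Chain' (· ≠ ·) (c :: alt n b)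
  | 0, _, _, _ => List.isChain_singleton _
  | n + 1, b, c, h => by
    rw [alt]
    exact List.isChain_cons_cons.mpr ⟨h, alt_chain n (!b) b (by simp)⟩

lemma alt_prefix : ∀ (m n : ℕ) (b : Bool), m ≤ n → (alt m b).Sublist (alt n b)
  | 0, _, _, _ => List.nil_sublist _
  | m + 1, n + 1, b, h => by
    rw [alt, alt]
    exact (alt_prefix m n (!b) (by omega)).cons₂ b

lemma rep_alt : ∀ (c m : ℕ),
    (List.replicate c false ++ alt m true).Sublist (alt (m + 2 * c) true)
  | 0, m => by simp
  | c + 1, m => by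
    have he : m + 2 * (c + 1) = (m + 2 * c) + 1 + 1 := by omega
    rw [he, alt, alt]
    simp only [Bool.not_true, Bool.not_false, List.replicate_succ, List.cons_append]
    exact ((rep_alt c m).cons₂ false).cons true

/- ----- the words w i ----- -/

def wrd (k i : ℕ) : List Bool := List.replicate (k - i) false ++ alt i true

lemma wrd_length {k i : ℕ} (h : i ≤ k) : (wrd k i).length = k := by
  simp [wrd]; omega


lemma dest_rep : ∀ (m : ℕ) (l : List Bool),
    (List.replicate (m + 1) false ++ l).destutter (· ≠ ·) = (false :: l).destutter (· ≠ ·)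
  | 0, l => rfl
  | m + 1, l => by
    have : List.replicate (m + 1 + 1) false ++ l
        = false :: false :: (List.replicate m false ++ l) := by
      simp [List.replicate_succ]
    rw [this, List.destutter_cons_cons]
    simp only [ne_eq, not_true_eq_false, if_false]
    have := dest_rep m l
    simpa [List.destutter, List.replicate_succ] using this

lemma runs_wrd {k i : ℕ} (h : i < k) : runs (wrd k i) = i + 1 := by
  have hk : k - i = (k - i - 1) + 1 := by omega
  unfold runs wrd
  rw [hk, dest_rep]
  rw [(List.destutter_eq_self_iff _ _).mpr (alt_chain i true false (by simp))]
  simp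

lemma runs_pos {l : List Bool} (h : l ≠ []) : 1 ≤ runs l := by
  cases l with
  | nil => simp at h
  | cons a l =>
    have : (a :: l).destutter (· ≠ ·) = List.destutter' (· ≠ ·) a l := rfl
    rw [runs, this]
    have := List.destutter'_ne_nil l (· ≠ ·) (a := a)
    exact List.length_pos_iff.mpr this

lemma runs_le_length (l : List Bool) : runs l ≤ l.length :=
  (List.destutter_sublist _ _).length_le

/- ----- lcs lower bound between words ----- -/

lemma lcs_wrd {k i j : ℕ} (hij : i < j) (hj : j < k) :
    k - j + (j - i) / 2 + i ≤ lcsLen (wrd k i) (wrd k j) := by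
  set c := (j - i) / 2 with hc
  set z := List.replicate (k - j + c) false ++ alt i true with hzdef
  have hzi : z.Sublist (wrd k i) :=
    List.Sublist.append ((List.replicate_sublist_replicate false).mpr (by omega))
      (List.Sublist.refl _)
  have hzj : z.Sublist (wrd k j) := by
    have h1 : z = List.replicate (k - j) false ++ (List.replicate c false ++ alt i true) := by
      rw [hzdef, ← List.append_assoc, ← List.replicate_add]
    rw [h1]
    refine List.Sublist.append (List.Sublist.refl _) ?_
    exact (rep_alt c i).trans (alt_prefix _ _ _ (by omega))
  have := le_lcsLen hzi hzj
  have hzl : z.length = k - j + c + i := by simp [hzdef]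
  omega

/- ----- counting: length of a Bool list ----- -/

lemma len_counts (z : List Bool) : z.length = z.count true + z.count false := by
  induction z with
  | nil => rfl
  | cons b z ih =>
    rw [List.length_cons, List.count_cons, List.count_cons, ih]
    cases b <;> simp <;> omega

lemma lcs_block_le (a c b d : ℕ) :
    lcsLen (List.replicate a true ++ List.replicate c false)
      (List.replicate b true ++ List.replicate d false) ≤ min a b + min c d := by
  obtain ⟨z, hz, hzx, hzy⟩ := exists_lcs (List.replicate a true ++ List.replicate c false)
    (List.replicate b true ++ List.replicate d false)
  have h1 := hzx.count_le true
  have h2 := hzx.count_le false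
  have h3 := hzy.count_le true
  have h4 := hzy.count_le false
  simp [List.count_append, List.count_replicate] at h1 h2 h3 h4
  have := len_counts z
  rw [← hz]
  omega

lemma lcsLen_comm (x y : List Bool) : lcsLen x y = lcsLen y x := by
  unfold lcsLen
  congr 1
  ext n
  exact ⟨fun ⟨z,h1,h2,h3⟩ => ⟨z,h1,h3,h2⟩, fun ⟨z,h1,h2,h3⟩ => ⟨z,h1,h3,h2⟩⟩

lemma ofFn_xf {k : ℕ} (i : Fin k) :
    List.ofFn (fun j : Fin k => (wrd k (i:ℕ)).getD (j:ℕ) false) = wrd k (i:ℕ) := by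
  have hl : (wrd k (i:ℕ)).length = k := wrd_length i.isLt.le
  apply List.ext_getElem
  · simp [hl]
  · intro n h1 h2
    rw [List.getElem_ofFn]
    exact List.getD_eq_getElem _ _ h2

lemma runs_ofFn_bounds {k : ℕ} (hk : 1 ≤ k) (x : Fin k → Bool) :
    1 ≤ runs (List.ofFn x) ∧ runs (List.ofFn x) ≤ k := by
  constructor
  · apply runs_pos
    intro h
    have := congrArg List.length h
    simp at this
    omega
  · have := runs_le_length (List.ofFn x)
    simpa using this

lemma concat_dID_ge {k r : ℕ} (x y p q : List Bool) (hx : x.length = k) (hy : y.length = k)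
    (hp : p.length = r) (hq' : q.length = r) : dID p q ≤ dID (x ++ p) (y ++ q) := by
  have hs := lcs_concat_le x y p q
  have h2 : lcsLen p q ≤ r := hp ▸ lcsLen_le_left p q
  rw [hx, hy] at hs
  simp only [dID, List.length_append, hx, hy, hp, hq']
  omega

lemma construct {k t r : ℕ} (hk : 1 ≤ k) (B : Fin k → Fin k → ℕ)
    (hBgt : ∀ i j : Fin k, i ≠ j → 2 * t < B i j)
    (q : Fin k → List Bool) (hq : IsIrregularCode B r q) :
    ∃ p, IsFCIDC (runsFn k) t r p := by
  refine ⟨fun x => q ⟨runs (List.ofFn x) - 1, by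
      have h := runs_ofFn_bounds hk x; omega⟩, fun x => hq.1 _, ?_⟩
  intro x y hxy
  have hx := runs_ofFn_bounds hk x
  have hy := runs_ofFn_bounds hk y
  set i : Fin k := ⟨runs (List.ofFn x) - 1, by omega⟩ with hi
  set j : Fin k := ⟨runs (List.ofFn y) - 1, by omega⟩ with hj
  have hij : i ≠ j := by
    intro h
    apply hxy
    have hv := congrArg Fin.val h
    simp only [hi, hj] at hv
    show runs (List.ofFn x) = runs (List.ofFn y)
    omega
  have h1 : 2 * t < B i j := hBgt i j hij
  have h2 : B i j ≤ dID (q i) (q j) := hq.2 i j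
  have h3 : dID (q i) (q j) ≤ dID (List.ofFn x ++ q i) (List.ofFn y ++ q j) :=
    concat_dID_ge (k := k) (r := r) _ _ _ _ (List.length_ofFn (f := x)) (List.length_ofFn (f := y))
      (hq.1 i) (hq.1 j)
  exact lt_of_lt_of_le (lt_of_lt_of_le h1 h2) h3

lemma explicit_code (k t : ℕ) (hk : 1 ≤ k) (B : Fin k → Fin k → ℕ)
    (hBle : ∀ i j : Fin k, i ≠ j → B i j ≤ 2 * (t + k + 1) - 1)
    (hBdiag : ∀ i, B i i = 0) :
    ∃ q, IsIrregularCode B (k * (t + k + 1)) q := by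
  set D := t + k + 1 with hD
  set N := k * D with hN
  have hlen : ∀ i : Fin k,
      (List.replicate ((i:ℕ) * D) true ++ List.replicate ((k - (i:ℕ)) * D) false).length = N := by
    intro i
    rw [List.length_append, List.length_replicate, List.length_replicate, ← Nat.add_mul]
    have := i.isLt
    congr 1
    omega
  refine ⟨fun i => List.replicate ((i:ℕ) * D) true ++ List.replicate ((k - (i:ℕ)) * D) false,
    hlen, ?_⟩
  intro i j
  by_cases hij : i = j
  · subst hij; rw [hBdiag]; exact Nat.zero_le _
  · have hv : (i:ℕ) ≠ (j:ℕ) := fun hh => hij (Fin.ext hh)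
    have hi := i.isLt
    have hj := j.isLt
    have hblock := lcs_block_le ((i:ℕ)*D) ((k-(i:ℕ))*D) ((j:ℕ)*D) ((k-(j:ℕ))*D)
    have key : min ((i:ℕ)*D) ((j:ℕ)*D) + min ((k-(i:ℕ))*D) ((k-(j:ℕ))*D) + D ≤ N := by
      rcases le_total (i:ℕ) (j:ℕ) with h | h
      · have h1 : min ((i:ℕ)*D) ((j:ℕ)*D) = (i:ℕ)*D :=
          min_eq_left (Nat.mul_le_mul_right _ h)
        have h2 : min ((k-(i:ℕ))*D) ((k-(j:ℕ))*D) = (k-(j:ℕ))*D :=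
          min_eq_right (Nat.mul_le_mul_right _ (by omega))
        rw [h1, h2]
        calc (i:ℕ)*D + (k-(j:ℕ))*D + D = ((i:ℕ) + (k-(j:ℕ)) + 1) * D := by ring
        _ ≤ k * D := Nat.mul_le_mul_right _ (by omega)
      · have h1 : min ((i:ℕ)*D) ((j:ℕ)*D) = (j:ℕ)*D :=
          min_eq_right (Nat.mul_le_mul_right _ h)
        have h2 : min ((k-(i:ℕ))*D) ((k-(j:ℕ))*D) = (k-(i:ℕ))*D :=
          min_eq_left (Nat.mul_le_mul_right _ (by omega))
        rw [h1, h2]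
        calc (j:ℕ)*D + (k-(i:ℕ))*D + D = ((j:ℕ) + (k-(i:ℕ)) + 1) * D := by ring
        _ ≤ k * D := Nat.mul_le_mul_right _ (by omega)
    have hBij : B i j ≤ 2 * D - 1 := hBle i j hij
    simp only [dID, hlen i, hlen j]
    have hDpos : 1 ≤ D := by omega
    omega


theorem stmt13 (k t : ℕ) (ht : 1 ≤ t)
    (A B : Fin k → Fin k → ℕ)
    (hA : ∀ i j : Fin k, A i j =
      if i = j then 0
      else if Odd (Nat.dist (i : ℕ) (j : ℕ)) then 2 * t + 1 - Nat.dist (i : ℕ) (j : ℕ)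
      else 2 * t + 2 - Nat.dist (i : ℕ) (j : ℕ))
    (hB : ∀ i j : Fin k, B i j =
      if i = j then 0
      else if Odd (Nat.dist (i : ℕ) (j : ℕ)) then 2 * (t + k) + 1 - Nat.dist (i : ℕ) (j : ℕ)
      else 2 * (t + k + 1) - Nat.dist (i : ℕ) (j : ℕ)) :
    N1 A ≤ optRed (runsFn k) t ∧ optRed (runsFn k) t ≤ N2 B k := by
  by_cases hk0 : k = 0
  · subst hk0
    constructor
    · have h0 : (0:ℕ) ∈ {r | ∃ p, IsIrregularCode A r p} :=
        ⟨fun i => i.elim0, fun i => i.elim0, fun i => i.elim0⟩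
      exact le_trans (Nat.sInf_le h0) (Nat.zero_le _)
    · have h0 : (0:ℕ) ∈ {r | ∃ p, IsFCIDC (runsFn 0) t r p} :=
        ⟨fun _ => [], fun x => rfl, fun x y hxy =>
          absurd (congrArg (runsFn 0) (funext fun j => j.elim0 : x = y)) hxy⟩
      exact le_trans (Nat.sInf_le h0) (Nat.zero_le _)
  · have hk1 : 1 ≤ k := by omega
    have hdist : ∀ i j : Fin k, i ≠ j →
        1 ≤ Nat.dist (i:ℕ) (j:ℕ) ∧ Nat.dist (i:ℕ) (j:ℕ) ≤ k - 1 := by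
      intro i j h
      have hv : (i:ℕ) ≠ (j:ℕ) := fun hh => h (Fin.ext hh)
      have hi := i.isLt
      have hj := j.isLt
      have hd : Nat.dist (i:ℕ) (j:ℕ) = ((i:ℕ) - (j:ℕ)) + ((j:ℕ) - (i:ℕ)) := rfl
      omega
    have hBgt : ∀ i j : Fin k, i ≠ j → 2 * t < B i j := by
      intro i j h
      rw [hB i j, if_neg h]
      have := hdist i j h
      split <;> omega
    have hBle : ∀ i j : Fin k, i ≠ j → B i j ≤ 2 * (t + k + 1) - 1 := by
      intro i j h
      rw [hB i j, if_neg h]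
      have := hdist i j h
      split <;> omega
    have hBdiag : ∀ i : Fin k, B i i = 0 := fun i => by rw [hB]; simp
    obtain ⟨q0, hq0⟩ := explicit_code k t hk1 B hBle hBdiag
    have hFne : ∃ p, IsFCIDC (runsFn k) t (k*(t+k+1)) p := construct hk1 B hBgt q0 hq0
    constructor
    · -- N1 A ≤ optRed
      have hne : {r | ∃ p, IsFCIDC (runsFn k) t r p}.Nonempty := ⟨_, hFne⟩
      obtain ⟨p, hp⟩ : ∃ p, IsFCIDC (runsFn k) t (optRed (runsFn k) t) p := Nat.sInf_mem hne
      set r := optRed (runsFn k) t with hr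
      apply Nat.sInf_le
      refine ⟨fun i => p (fun j' => (wrd k (i:ℕ)).getD (j':ℕ) false), fun i => hp.1 _, ?_⟩
      intro i j
      by_cases hij : i = j
      · rw [hA, if_pos hij]; exact Nat.zero_le _
      · have hfi : runsFn k (fun j' => (wrd k (i:ℕ)).getD (j':ℕ) false) = (i:ℕ) + 1 := by
          show runs (List.ofFn _) = _
          rw [ofFn_xf i, runs_wrd i.isLt]
        have hfj : runsFn k (fun j' => (wrd k (j:ℕ)).getD (j':ℕ) false) = (j:ℕ) + 1 := by
          show runs (List.ofFn _) = _
          rw [ofFn_xf j, runs_wrd j.isLt]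
        have hne' : runsFn k (fun j' => (wrd k (i:ℕ)).getD (j':ℕ) false)
            ≠ runsFn k (fun j' => (wrd k (j:ℕ)).getD (j':ℕ) false) := by
          rw [hfi, hfj]
          intro h
          exact hij (Fin.ext (by omega))
        have hmain := hp.2 _ _ hne'
        rw [ofFn_xf i, ofFn_xf j] at hmain
        set pi := p (fun j' => (wrd k (i:ℕ)).getD (j':ℕ) false) with hpi
        set pj := p (fun j' => (wrd k (j:ℕ)).getD (j':ℕ) false) with hpj
        set L1 := lcsLen (wrd k (i:ℕ)) (wrd k (j:ℕ)) with hL1def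
        set L2 := lcsLen pi pj with hL2def
        set Lc := lcsLen (wrd k (i:ℕ) ++ pi) (wrd k (j:ℕ) ++ pj) with hLcdef
        have hsup : L1 + L2 ≤ Lc := lcs_superadd _ _ _ _
        have hwl : (wrd k (i:ℕ)).length = k := wrd_length i.isLt.le
        have hwl' : (wrd k (j:ℕ)).length = k := wrd_length j.isLt.le
        have hpl : pi.length = r := hp.1 _
        have hpl' : pj.length = r := hp.1 _
        have hLc : Lc ≤ k + r := by
          have := lcsLen_le_left (wrd k (i:ℕ) ++ pi) (wrd k (j:ℕ) ++ pj)
          rw [List.length_append, hwl, hpl] at this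
          exact this
        have hL2 : L2 ≤ r := by
          have := lcsLen_le_left pi pj
          rw [hpl] at this
          exact this
        have hmain' : 2 * t < (k + r) + (k + r) - 2 * Lc := by
          have : dID (wrd k (i:ℕ) ++ pi) (wrd k (j:ℕ) ++ pj)
              = (k + r) + (k + r) - 2 * Lc := by
            simp only [dID, List.length_append, hwl, hwl', hpl, hpl', hLcdef]
          rw [this] at hmain
          exact hmain
        have hdq : dID pi pj = r + r - 2 * L2 := by
          simp only [dID, hpl, hpl', hL2def]
        rw [hA, if_neg hij, hdq]
        have hv : (i:ℕ) ≠ (j:ℕ) := fun hh => hij (Fin.ext hh)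
        have hd : Nat.dist (i:ℕ) (j:ℕ) = ((i:ℕ) - (j:ℕ)) + ((j:ℕ) - (i:ℕ)) := rfl
        have hi := i.isLt
        have hj := j.isLt
        rcases lt_or_gt_of_ne hv with h | h
        · have hL1 := lcs_wrd h j.isLt
          rw [← hL1def] at hL1
          split_ifs with ho
          · rw [Nat.odd_iff] at ho; omega
          · rw [Nat.not_odd_iff_even, Nat.even_iff] at ho; omega
        · have hL1' := lcs_wrd h i.isLt
          have hcomm : lcsLen (wrd k (j:ℕ)) (wrd k (i:ℕ)) = L1 := lcsLen_comm _ _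
          rw [hcomm] at hL1'
          split_ifs with ho
          · rw [Nat.odd_iff] at ho; omega
          · rw [Nat.not_odd_iff_even, Nat.even_iff] at ho; omega
    · -- optRed ≤ N2 B k
      have hN2ne : {r | k ≤ r ∧ ∃ q, IsIrregularCode B r q}.Nonempty :=
        ⟨k*(t+k+1), Nat.le_mul_of_pos_right k (by omega), q0, hq0⟩
      obtain ⟨hge, q, hq⟩ : k ≤ N2 B k ∧ ∃ q, IsIrregularCode B (N2 B k) q :=
        Nat.sInf_mem hN2ne
      obtain ⟨p, hp⟩ := construct hk1 B hBgt q hq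
      exact Nat.sInf_le ⟨p, hp⟩
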